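/- arXiv:2511.02723 — 3 statements merged into one kernel-verified Lean document; each statement's English description precedes it below -/
import Mathlib

section
/- For every real number α ∈ (1, 6/5), the inequality min{ (2α²−α)/(8−4α), (2α²+α−2)/4 } ≥ (3−2α)/2 holds if and only if α ≥ (13−√73)/4. Moreover 1.113 < (13−√73)/4 < 1.115, and 2α₁³ + 3α₁² − 4α₁ − 2 > 0 for α₁ = (13−√73)/4 (so that α₁ exceeds the root α₀ of 2α³+3α²−4α−2 = 0 lying in (1, 6/5)). -/
/-- For every real `α ∈ (1, 6/5)`,
`min{(2α²−α)/(8−4α), (2α²+α−2)/4} ≥ (3−2α)/2` iff `α ≥ (13−√73)/4`.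
Moreover `1.113 < (13−√73)/4 < 1.115`, and `2α₁³ + 3α₁² − 4α₁ − 2 > 0`
for `α₁ = (13−√73)/4`. -/
theorem stmt_6 (α : ℝ) (hα1 : 1 < α) (hα2 : α < 6 / 5) :
    (min ((2 * α ^ 2 - α) / (8 - 4 * α)) ((2 * α ^ 2 + α - 2) / 4) ≥ (3 - 2 * α) / 2 ↔
      α ≥ (13 - Real.sqrt 73) / 4) ∧
    1.113 < (13 - Real.sqrt 73) / 4 ∧ (13 - Real.sqrt 73) / 4 < 1.115 ∧
    2 * ((13 - Real.sqrt 73) / 4) ^ 3 + 3 * ((13 - Real.sqrt 73) / 4) ^ 2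
      - 4 * ((13 - Real.sqrt 73) / 4) - 2 > 0 := by
  set s := Real.sqrt 73 with hs
  have hs0 : (0:ℝ) ≤ s := Real.sqrt_nonneg 73
  have hs2 : s ^ 2 = 73 := Real.sq_sqrt (by norm_num)
  have hslo : (8.54 : ℝ) < s := by nlinarith [hs2, hs0]
  have hshi : s < (8.545 : ℝ) := by nlinarith [hs2, hs0]
  have hden : (0:ℝ) < 8 - 4 * α := by linarith
  refine ⟨⟨fun h => ?_, fun h => ?_⟩, by linarith, by linarith, by nlinarith [hs2]⟩
  · have h1 : (3 - 2 * α) / 2 ≤ (2 * α ^ 2 - α) / (8 - 4 * α) :=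
      le_trans h (min_le_left _ _)
    rw [div_le_div_iff₀ (by norm_num) hden] at h1
    -- h1 : (3 - 2α)(8 - 4α) ≤ (2α² - α) * 2, i.e. 2α² - 13α + 12 ≤ 0
    nlinarith [hs2, hs0, sq_nonneg (s - (13 - 4 * α))]
  · have hα' : 4 * α ≥ 13 - s := by linarith
    have key : 2 * α ^ 2 - 13 * α + 12 ≤ 0 := by
      nlinarith [mul_nonneg (by linarith : (0:ℝ) ≤ 4 * α - 13 + s)
        (by linarith : (0:ℝ) ≤ 13 + s - 4 * α)]
    have g1 : (3 - 2 * α) / 2 ≤ (2 * α ^ 2 - α) / (8 - 4 * α) := by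
      rw [div_le_div_iff₀ (by norm_num) hden]
      nlinarith
    have g2 : (3 - 2 * α) / 2 ≤ (2 * α ^ 2 + α - 2) / 4 := by
      rw [div_le_div_iff₀ (by norm_num) (by norm_num : (0:ℝ) < 4)]
      nlinarith [sq_nonneg (4 * α - 13 + s), hs2]
    exact le_min g1 g2
end

section
/- Let α ∈ (1, 4/√15] and define the sequence (ρ_k) by ρ₀ = 0 and ρ_{k+1} = α(2α − 1 − 2ρ_k)/(4(2 − α − 2ρ_k)). Set ρ_M = (4 − α − √(16 − 15α²))/8. Then for every k one has 0 ≤ ρ_k < ρ_M and 2 − α − 2ρ_k > 0, the sequence (ρ_k) is strictly increasing, ρ_k converges to ρ_M as k → ∞, and ρ_M < (3−2α)/2. -/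
/-- Let `α ∈ (1, 4/√15]` and define `ρ₀ = 0`,
`ρ_{k+1} = α(2α − 1 − 2ρ_k)/(4(2 − α − 2ρ_k))`. Set
`ρ_M = (4 − α − √(16 − 15α²))/8`. Then for every `k` one has `0 ≤ ρ_k < ρ_M` and
`2 − α − 2ρ_k > 0`, `(ρ_k)` is strictly increasing, `ρ_k → ρ_M`, and
`ρ_M < (3−2α)/2`. -/
theorem stmt_10 (α : ℝ) (hα1 : 1 < α) (hα2 : α ≤ 4 / Real.sqrt 15)
    (ρ : ℕ → ℝ) (h0 : ρ 0 = 0)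
    (hrec : ∀ k, ρ (k + 1) = α * (2 * α - 1 - 2 * ρ k) / (4 * (2 - α - 2 * ρ k))) :
    (∀ k, 0 ≤ ρ k ∧ ρ k < (4 - α - Real.sqrt (16 - 15 * α ^ 2)) / 8 ∧
      0 < 2 - α - 2 * ρ k) ∧
    StrictMono ρ ∧
    Filter.Tendsto ρ Filter.atTop (nhds ((4 - α - Real.sqrt (16 - 15 * α ^ 2)) / 8)) ∧
    (4 - α - Real.sqrt (16 - 15 * α ^ 2)) / 8 < (3 - 2 * α) / 2 := by
  have h15 : (0:ℝ) < Real.sqrt 15 := Real.sqrt_pos.2 (by norm_num)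
  have h15sq : Real.sqrt 15 ^ 2 = 15 := Real.sq_sqrt (by norm_num)
  have hα0 : (0:ℝ) < α := lt_trans one_pos hα1
  have hsq : 15 * α ^ 2 ≤ 16 := by
    have h := (le_div_iff₀ h15).1 hα2
    nlinarith [h15, h15sq, hα0]
  set D := Real.sqrt (16 - 15 * α ^ 2) with hD
  have hD0 : 0 ≤ D := Real.sqrt_nonneg _
  have hDsq : D ^ 2 = 16 - 15 * α ^ 2 := Real.sq_sqrt (by linarith)
  set ρM : ℝ := (4 - α - D) / 8 with hρM
  have hα43 : α < 4 / 3 := by nlinarith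
  have hα87 : 7 * α < 8 := by nlinarith
  have hρM0 : 0 < ρM := by
    rw [hρM]
    nlinarith [hDsq, hD0, hα1]
  have hDM : 0 < 2 - α - 2 * ρM := by
    rw [hρM]; nlinarith [hD0, hα43]
  -- quadratic identity for the fixed point
  have hq : 8 * ρM ^ 2 + (2 * α - 8) * ρM + (2 * α ^ 2 - α) = 0 := by
    rw [hρM]; linear_combination (1/8 : ℝ) * hDsq
  -- key step lemma
  have key : ∀ x : ℝ, 0 ≤ x → x < ρM →
      x < α * (2 * α - 1 - 2 * x) / (4 * (2 - α - 2 * x)) ∧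
      α * (2 * α - 1 - 2 * x) / (4 * (2 - α - 2 * x)) < ρM := by
    intro x hx0 hxM
    have hDx : 0 < 2 - α - 2 * x := by linarith
    have hDx4 : 0 < 4 * (2 - α - 2 * x) := by linarith
    constructor
    · rw [lt_div_iff₀ hDx4]
      have hfac : 0 < (ρM - x) * (8 - 2 * α - 8 * x - 8 * ρM) := by
        apply mul_pos (by linarith)
        have h16 : 16 * ρM = 8 - 2 * α - 2 * D := by rw [hρM]; ring
        nlinarith [hD0]
      nlinarith [hq, hfac]
    · rw [div_lt_iff₀ hDx4]
      have hfac : 0 < (8 * ρM - 2 * α) * (ρM - x) := by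
        apply mul_pos _ (by linarith)
        have h8 : 8 * ρM = 4 - α - D := by rw [hρM]; ring
        nlinarith [hDsq, hD0, hα1]
      nlinarith [hq, hfac]
  -- invariant
  have hinv : ∀ k, 0 ≤ ρ k ∧ ρ k < ρM := by
    intro k
    induction k with
    | zero => exact ⟨le_of_eq h0.symm, by rw [h0]; exact hρM0⟩
    | succ n ih =>
      have h := key (ρ n) ih.1 ih.2
      rw [hrec n]
      exact ⟨le_of_lt (lt_of_le_of_lt ih.1 h.1), h.2⟩
  have hlt : ∀ k, ρ k < ρ (k + 1) := by
    intro k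
    rw [hrec k]
    exact (key (ρ k) (hinv k).1 (hinv k).2).1
  have hmono : StrictMono ρ := strictMono_nat_of_lt_succ hlt
  have hbdd : BddAbove (Set.range ρ) := ⟨ρM, by rintro _ ⟨k, rfl⟩; exact (hinv k).2.le⟩
  -- convergence
  have hten : Filter.Tendsto ρ Filter.atTop (nhds (⨆ k, ρ k)) :=
    tendsto_atTop_ciSup hmono.monotone hbdd
  set L := ⨆ k, ρ k with hLdef
  have hLle : L ≤ ρM := ciSup_le fun k => (hinv k).2.le
  have hDL : 0 < 2 - α - 2 * L := by linarith
  have hDL4 : (4 : ℝ) * (2 - α - 2 * L) ≠ 0 := by positivity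
  have hten2 : Filter.Tendsto (fun k => ρ (k + 1)) Filter.atTop (nhds L) :=
    hten.comp (Filter.tendsto_add_atTop_nat 1)
  have htenf : Filter.Tendsto (fun k => α * (2 * α - 1 - 2 * ρ k) / (4 * (2 - α - 2 * ρ k)))
      Filter.atTop (nhds (α * (2 * α - 1 - 2 * L) / (4 * (2 - α - 2 * L)))) := by
    apply Filter.Tendsto.div
    · exact Filter.Tendsto.const_mul α (tendsto_const_nhds.sub (hten.const_mul 2))
    · exact Filter.Tendsto.const_mul 4 (tendsto_const_nhds.sub (hten.const_mul 2))
    · exact hDL4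
  have hfixdiv : α * (2 * α - 1 - 2 * L) / (4 * (2 - α - 2 * L)) = L := by
    apply tendsto_nhds_unique _ hten2
    have : (fun k => ρ (k + 1)) = fun k => α * (2 * α - 1 - 2 * ρ k) / (4 * (2 - α - 2 * ρ k)) :=
      funext hrec
    rw [this]
    exact htenf
  have hfix : α * (2 * α - 1 - 2 * L) = L * (4 * (2 - α - 2 * L)) :=
    (div_eq_iff hDL4).1 hfixdiv
  have hqL : 8 * L ^ 2 + (2 * α - 8) * L + (2 * α ^ 2 - α) = 0 := by
    linear_combination hfix
  have hLM : L = ρM := by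
    by_contra hne
    have hLlt : L < ρM := lt_of_le_of_ne hLle hne
    have h8 : 8 * ρM = 4 - α - D := by rw [hρM]; ring
    have hfac : 0 < (ρM - L) * (4 + D - α - 8 * L) := by
      apply mul_pos (by linarith)
      nlinarith [hD0]
    have hzero : (ρM - L) * (4 + D - α - 8 * L) = 0 := by
      linear_combination (ρM - L) * h8 - hq + hqL
    exact absurd hzero (ne_of_gt hfac)
  refine ⟨fun k => ⟨(hinv k).1, (hinv k).2, by linarith [(hinv k).2, hDM]⟩,
    hmono, ?_, ?_⟩
  · rw [← hLM]; exact hten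
  · linarith [hD0, hα87]
end

section
/- Let α ∈ (1, 6/5) satisfy 2α³ + 3α² − 4α − 2 ≤ 0 (i.e. α ≤ α₀), and set ρ = (3−2α)/2 and δ = 2(−α² − α + 3)/(3−α). Then 1 − 2ρ > 0, α − 2δ + 4 > 0, and: (i) δ ≤ (2α² − α + 2ρ(α−2))/(2(1−2ρ)); (ii) ρ ≤ α(2α + 2δ − 1)/(2(α − 2δ + 4)) and ρ ≤ (δ + α − 1)/2. -/
/-- Let `α ∈ (1, 6/5)` satisfy `2α³ + 3α² − 4α − 2 ≤ 0`, and set `ρ = (3−2α)/2` and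
`δ = 2(−α² − α + 3)/(3−α)`. Then `1 − 2ρ > 0`, `α − 2δ + 4 > 0`, and:
(i) `δ ≤ (2α² − α + 2ρ(α−2))/(2(1−2ρ))`;
(ii) `ρ ≤ α(2α + 2δ − 1)/(2(α − 2δ + 4))` and `ρ ≤ (δ + α − 1)/2`. -/
theorem stmt_17 (α ρ δ : ℝ) (hα1 : 1 < α) (hα2 : α < 6 / 5)
    (h : 2 * α ^ 3 + 3 * α ^ 2 - 4 * α - 2 ≤ 0)
    (hρ : ρ = (3 - 2 * α) / 2) (hδ : δ = 2 * (-α ^ 2 - α + 3) / (3 - α)) :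
    0 < 1 - 2 * ρ ∧ 0 < α - 2 * δ + 4 ∧
    δ ≤ (2 * α ^ 2 - α + 2 * ρ * (α - 2)) / (2 * (1 - 2 * ρ)) ∧
    ρ ≤ α * (2 * α + 2 * δ - 1) / (2 * (α - 2 * δ + 4)) ∧
    ρ ≤ (δ + α - 1) / 2 := by
  have h3 : (0:ℝ) < 3 - α := by linarith
  have hδ' : δ * (3 - α) = 2 * (-α ^ 2 - α + 3) := by
    rw [hδ]; field_simp
  have hρ1 : 0 < 1 - 2 * ρ := by rw [hρ]; nlinarith
  have h2 : 0 < α - 2 * δ + 4 := by nlinarith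
  refine ⟨hρ1, h2, ?_, ?_, ?_⟩
  · rw [le_div_iff₀ (by positivity)]
    nlinarith [sq_nonneg α, sq_nonneg (α-1), mul_pos h3 h3]
  · rw [le_div_iff₀ (by positivity)]
    nlinarith [sq_nonneg α, sq_nonneg (α-1), mul_pos h3 h3, mul_nonneg (mul_nonneg h3.le h3.le) (neg_nonneg.2 h)]
  · rw [hρ]; nlinarith
end
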